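/- Let λ > 0 and let x_t(i) ∈ ℝ^d for t ∈ [T], i ∈ [k] satisfy ‖x_t(i)‖₂ ≤ L. Define V_t = λI + Σ_{s=1}^t Σ_{i=1}^k x_s(i) x_s(i)ᵀ. Then Σ_{t=1}^T Σ_{i=1}^k min(1/k, x_t(i)ᵀ V_{t-1}^{-1} x_t(i)) ≤ 2d · log(1 + L²kT/(dλ)). -/

import Mathlib

/-!
Write the batch update as `V (t+1) = V t + B Bᵀ`, the columns of `B` being the `x t i`. The matrix
determinant lemma gives `det V (t+1) = det V t * det (1 + Bᵀ (V t)⁻¹ B)`, and `det (1 + W) ≥ 1 + tr W`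
for positive semidefinite `W`; the trace is the batch's total potential `q`. Each clipped term is at
most `1/k`, so the batch contributes at most `min 1 q ≤ 2 log (1 + q)`, and the rounds telescope to
`2 log (det V T / det V 0)`. Finally AM–GM on the eigenvalues (the tangent line of `log`) bounds
`log det V T` by `d log (tr V T / d) ≤ d log (λ + L²kT/d)`.
-/

open Matrix Finset

theorem Finset.one_add_sum_le_prod_one_add {ι R : Type*} [CommSemiring R] [PartialOrder R]
    [IsOrderedRing R] (s : Finset ι) {f : ι → R} (hf : ∀ i ∈ s, 0 ≤ f i) :
    1 + ∑ i ∈ s, f i ≤ ∏ i ∈ s, (1 + f i) := by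
  induction s using Finset.cons_induction with
  | empty => simp
  | cons a s _ ih =>
    rw [sum_cons, prod_cons]
    have hfa := hf a (mem_cons_self a s)
    have hs := fun i hi => hf i (mem_cons_of_mem hi)
    calc 1 + (f a + ∑ i ∈ s, f i)
        ≤ 1 + (f a + ∑ i ∈ s, f i) + f a * ∑ i ∈ s, f i :=
          le_add_of_nonneg_right (mul_nonneg hfa (sum_nonneg hs))
      _ = (1 + f a) * (1 + ∑ i ∈ s, f i) := by ring
      _ ≤ (1 + f a) * ∏ i ∈ s, (1 + f i) :=
          mul_le_mul_of_nonneg_left (ih hs) (add_nonneg zero_le_one hfa)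

theorem Real.min_one_le_two_mul_log_one_add {s : ℝ} (hs : 0 ≤ s) :
    min 1 s ≤ 2 * Real.log (1 + s) := by
  have hlog := Real.le_log_one_add_of_nonneg hs
  have hmin : min 1 s ≤ 2 * (2 * s / (s + 2)) := by
    rw [mul_div_assoc', le_div_iff₀ (by linarith)]
    rcases le_total s 1 with h | h
    · rw [min_eq_right h]; nlinarith
    · rw [min_eq_left h]; linarith
  linarith

theorem Finset.sum_min_one_div_card_le_min_one_sum {ι : Type*} (s : Finset ι) (u : ι → ℝ) :
    ∑ i ∈ s, min (1 / (#s : ℝ)) (u i) ≤ min 1 (∑ i ∈ s, u i) := by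
  refine le_min ?_ (sum_le_sum fun i _ => min_le_right _ _)
  calc ∑ i ∈ s, min (1 / (#s : ℝ)) (u i) ≤ ∑ i ∈ s, 1 / (#s : ℝ) :=
        sum_le_sum fun i _ => min_le_left _ _
    _ ≤ 1 := by
        rw [sum_const, nsmul_eq_mul, mul_one_div]
        exact div_self_le_one _

namespace Matrix

variable {n : Type*}

theorem mul_transpose_eq_sum_vecMulVec {ι : Type*} (s : Finset ι) (v : ι → n → ℝ) :
    (of fun j (i : s) => v i j) * (of fun j (i : s) => v i j)ᵀ =
      ∑ i ∈ s, vecMulVec (v i) (v i) := by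
  ext a b
  simp only [mul_apply, of_apply, transpose_apply, sum_apply, vecMulVec_apply]
  exact Finset.sum_coe_sort s fun i => v i a * v i b

variable [Fintype n]

theorem posSemidef_sum_vecMulVec {ι : Type*} (s : Finset ι) (v : ι → n → ℝ) :
    (∑ i ∈ s, vecMulVec (v i) (v i)).PosSemidef :=
  posSemidef_sum s fun i _ => by simpa using posSemidef_vecMulVec_self_star (v i)

theorem trace_sum_vecMulVec_le {ι : Type*} (s : Finset ι) (v : ι → n → ℝ) {C : ℝ}
    (hv : ∀ i ∈ s, v i ⬝ᵥ v i ≤ C) : (∑ i ∈ s, vecMulVec (v i) (v i)).trace ≤ #s * C := by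
  rw [trace_sum]
  simpa only [trace_vecMulVec, sum_const, nsmul_eq_mul] using sum_le_sum hv

variable [DecidableEq n]

theorem PosSemidef.one_add_trace_le_det_one_add {W : Matrix n n ℝ} (hW : W.PosSemidef) :
    1 + W.trace ≤ (1 + W).det := by
  set U := (hW.1.eigenvectorUnitary : Matrix n n ℝ)
  set μ := hW.1.eigenvalues
  have hspec : W = (U * diagonal μ) * star U := by
    conv_lhs => rw [hW.1.spectral_theorem, Unitary.conjStarAlgAut_apply]
    rfl
  have hdet : (1 + (U * diagonal μ) * star U).det = ∏ i, (1 + μ i) := by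
    rw [det_one_add_mul_comm, ← Matrix.mul_assoc, Unitary.coe_star_mul_self, Matrix.one_mul,
      ← diagonal_one, diagonal_add, det_diagonal]
  rw [← hspec] at hdet
  rw [hdet, hW.1.trace_eq_sum_eigenvalues]
  exact one_add_sum_le_prod_one_add _ fun i _ => hW.eigenvalues_nonneg i

theorem PosDef.det_mul_one_add_sum_le_det_add_sum_vecMulVec {V : Matrix n n ℝ} (hV : V.PosDef)
    {ι : Type*} (s : Finset ι) (v : ι → n → ℝ) :
    V.det * (1 + ∑ i ∈ s, v i ⬝ᵥ V⁻¹ *ᵥ v i) ≤ (V + ∑ i ∈ s, vecMulVec (v i) (v i)).det := by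
  classical
  set B : Matrix n s ℝ := of fun j i => v i j
  have htrace : (Bᵀ * V⁻¹ * B).trace = ∑ i ∈ s, v i ⬝ᵥ V⁻¹ *ᵥ v i := by
    rw [Matrix.mul_assoc]
    simp only [trace, diag, mul_apply, B, of_apply, transpose_apply, dotProduct, mulVec]
    exact Finset.sum_coe_sort s fun i => ∑ j, v i j * ∑ l, V⁻¹ j l * v i l
  have hW : (Bᵀ * V⁻¹ * B).PosSemidef := by
    simpa using hV.inv.posSemidef.conjTranspose_mul_mul_same B
  rw [← mul_transpose_eq_sum_vecMulVec, det_add_mul _ _ hV.det_pos.ne'.isUnit, ← htrace]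
  exact mul_le_mul_of_nonneg_left hW.one_add_trace_le_det_one_add hV.det_pos.le

theorem PosDef.log_det_le_card_mul_log {M : Matrix n n ℝ} (hM : M.PosDef) {c : ℝ} (hc : 0 < c)
    (htr : M.trace ≤ Fintype.card n * c) : Real.log M.det ≤ Fintype.card n * Real.log c := by
  set μ := hM.1.eigenvalues
  have hμ : ∀ i, 0 < μ i := hM.eigenvalues_pos
  have hdet : M.det = ∏ i, μ i := by simpa using hM.1.det_eq_prod_eigenvalues
  have htrace : M.trace = ∑ i, μ i := by simpa using hM.1.trace_eq_sum_eigenvalues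
  have htangent : ∀ i, Real.log (μ i) ≤ Real.log c + μ i / c - 1 := fun i => by
    have := Real.log_le_sub_one_of_pos (div_pos (hμ i) hc)
    rw [Real.log_div (hμ i).ne' hc.ne'] at this
    linarith
  have hsum : (∑ i, μ i) / c ≤ Fintype.card n := by
    rwa [div_le_iff₀ hc, ← htrace]
  rw [hdet, Real.log_prod fun i _ => (hμ i).ne']
  calc ∑ i, Real.log (μ i)
      ≤ ∑ i, (Real.log c + μ i / c - 1) := sum_le_sum fun i _ => htangent i
    _ = Fintype.card n * Real.log c + ((∑ i, μ i) / c - Fintype.card n) := by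
        rw [sum_sub_distrib, sum_add_distrib, sum_div]
        simp only [sum_const, card_univ, nsmul_eq_mul, mul_one]; ring
    _ ≤ Fintype.card n * Real.log c := by linarith

theorem PosDef.sum_min_le_two_mul_log_det_add_sub {V : Matrix n n ℝ} (hV : V.PosDef) {ι : Type*}
    (s : Finset ι) (v : ι → n → ℝ) :
    ∑ i ∈ s, min (1 / (#s : ℝ)) (v i ⬝ᵥ V⁻¹ *ᵥ v i) ≤
      2 * (Real.log (V + ∑ i ∈ s, vecMulVec (v i) (v i)).det - Real.log V.det) := by
  set q := ∑ i ∈ s, v i ⬝ᵥ V⁻¹ *ᵥ v i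
  have hq : 0 ≤ q := sum_nonneg fun i _ => by
    simpa using hV.inv.posSemidef.dotProduct_mulVec_nonneg (v i)
  have hdet := hV.det_mul_one_add_sum_le_det_add_sum_vecMulVec s v
  have hpos : 0 < (V + ∑ i ∈ s, vecMulVec (v i) (v i)).det :=
    (mul_pos hV.det_pos (by linarith)).trans_le hdet
  have hlog : Real.log (1 + q) ≤
      Real.log (V + ∑ i ∈ s, vecMulVec (v i) (v i)).det - Real.log V.det := by
    rw [← Real.log_div hpos.ne' hV.det_pos.ne']
    exact Real.log_le_log (by linarith) ((le_div_iff₀' hV.det_pos).2 hdet)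
  calc _ ≤ min 1 q := s.sum_min_one_div_card_le_min_one_sum _
    _ ≤ 2 * Real.log (1 + q) := Real.min_one_le_two_mul_log_one_add hq
    _ ≤ _ := by linarith

end Matrix

theorem elliptic_potential_batched_general {d k T : ℕ} (hd : 0 < d)
    (L lam : ℝ) (hlam : 0 < lam) (x : ℕ → ℕ → (Fin d → ℝ))
    (hL : ∀ t ∈ Finset.range T, ∀ i ∈ Finset.range k, Real.sqrt (∑ j, (x t i j) ^ 2) ≤ L)
    (V : ℕ → Matrix (Fin d) (Fin d) ℝ)
    (hV : ∀ t, V t = lam • (1 : Matrix (Fin d) (Fin d) ℝ) +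
      ∑ s ∈ Finset.range t, ∑ i ∈ Finset.range k, vecMulVec (x s i) (x s i)) :
    ∑ t ∈ Finset.range T, ∑ i ∈ Finset.range k,
        min (1 / (k : ℝ)) (x t i ⬝ᵥ (V t)⁻¹ *ᵥ x t i) ≤
      2 * d * Real.log (1 + L ^ 2 * k * T / (d * lam)) := by
  set r := 1 + L ^ 2 * k * T / (d * lam)
  have hVsucc : ∀ t, V (t + 1) = V t + ∑ i ∈ range k, vecMulVec (x t i) (x t i) := fun t => by
    rw [hV, hV, sum_range_succ, add_assoc]
  have hVpd : ∀ t, (V t).PosDef := fun t => by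
    rw [hV]
    exact (PosDef.one.smul hlam).add_posSemidef
      (posSemidef_sum _ fun s _ => posSemidef_sum_vecMulVec _ _)
  have htrace : (V T).trace ≤ d * (lam * r) := by
    have hx : ∀ t ∈ range T, ∀ i ∈ range k, x t i ⬝ᵥ x t i ≤ L ^ 2 := fun t ht i hi => by
      simpa [dotProduct, sq] using (Real.sqrt_le_iff.1 (hL t ht i hi)).2
    have hbatch t (ht : t ∈ range T) := trace_sum_vecMulVec_le (range k) (x t) (hx t ht)
    rw [hV, trace_add, trace_sum]
    calc _ ≤ lam * d + ∑ t ∈ range T, (k * L ^ 2 : ℝ) := by simpa using sum_le_sum hbatch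
      _ = d * (lam * r) := by simp only [sum_const, card_range, nsmul_eq_mul, r]; field_simp
  have hlogT := (hVpd T).log_det_le_card_mul_log (c := lam * r) (by positivity)
    (by simpa using htrace)
  rw [Fintype.card_fin] at hlogT
  calc ∑ t ∈ range T, ∑ i ∈ range k, min (1 / (k : ℝ)) (x t i ⬝ᵥ (V t)⁻¹ *ᵥ x t i)
      ≤ ∑ t ∈ range T, 2 * (Real.log (V (t + 1)).det - Real.log (V t).det) :=
        sum_le_sum fun t _ => by
          simpa [hVsucc] using (hVpd t).sum_min_le_two_mul_log_det_add_sub (range k) (x t)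
    _ = 2 * (Real.log (V T).det - Real.log (V 0).det) := by
        rw [← mul_sum, sum_range_sub fun t => Real.log (V t).det]
    _ ≤ 2 * (d * Real.log (lam * r) - d * Real.log lam) := by
        rw [show (V 0).det = lam ^ d by simp [hV], Real.log_pow]; linarith
    _ = 2 * d * Real.log r := by rw [Real.log_mul hlam.ne' (by positivity)]; ring

theorem elliptic_potential_batched {d k T : ℕ} (hd : 0 < d) (hk : 0 < k)
    (L lam : ℝ) (hlam : 0 < lam) (x : ℕ → ℕ → (Fin d → ℝ))
    (hL : ∀ t ∈ Finset.range T, ∀ i ∈ Finset.range k, Real.sqrt (∑ j, (x t i j) ^ 2) ≤ L)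
    (V : ℕ → Matrix (Fin d) (Fin d) ℝ)
    (hV : ∀ t, V t = lam • (1 : Matrix (Fin d) (Fin d) ℝ) +
      ∑ s ∈ Finset.range t, ∑ i ∈ Finset.range k, vecMulVec (x s i) (x s i)) :
    ∑ t ∈ Finset.range T, ∑ i ∈ Finset.range k,
        min (1 / (k : ℝ)) (x t i ⬝ᵥ (V t)⁻¹ *ᵥ x t i) ≤
      2 * d * Real.log (1 + L ^ 2 * k * T / (d * lam)) :=
  elliptic_potential_batched_general hd L lam hlam x hL V hV
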